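/- arXiv:1002.4095 — 2 statements merged into one kernel-verified Lean document; each statement's English description precedes it below -/
import Mathlib

section
/- Let A be a dilation matrix with smallest singular value μ > 2, and let F = [-1/2, 1/2)^n. Then the set D = A(F) ∩ ℤ^n is a complete set of coset representatives of ℤ^n / A(ℤ^n). -/
open MeasureTheory Set

/-- `A` is a dilation matrix: an integer matrix all of whose complex
eigenvalues have absolute value greater than 1. -/
def IsDilation {n : ℕ} (A : Matrix (Fin n) (Fin n) ℤ) : Prop :=
  ∀ μ ∈ spectrum ℂ (A.map (Int.cast : ℤ → ℂ)), 1 < ‖μ‖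

/-- `D` is a complete set of coset representatives of `ℤ^n / A(ℤ^n)`. -/
def IsDigitSet {n : ℕ} (A : Matrix (Fin n) (Fin n) ℤ) (D : Set (Fin n → ℤ)) : Prop :=
  ∀ x : Fin n → ℤ, ∃! d : Fin n → ℤ, d ∈ D ∧ ∃ y : Fin n → ℤ, x = A.mulVec y + d

/-- The real matrix corresponding to an integer matrix. -/
noncomputable def realMat {n : ℕ} (A : Matrix (Fin n) (Fin n) ℤ) :
    Matrix (Fin n) (Fin n) ℝ :=
  A.map (Int.cast : ℤ → ℝ)

/-- Cast an integer vector to a real vector. -/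
def castVec {n : ℕ} (d : Fin n → ℤ) : Fin n → ℝ := fun i => (d i : ℝ)

/-- The self-affine set `T(A,D) = { Σ_{j=1}^∞ A^{-j} d_j : d_j ∈ D }`. -/
noncomputable def Tile {n : ℕ} (A : Matrix (Fin n) (Fin n) ℤ) (D : Set (Fin n → ℤ)) :
    Set (Fin n → ℝ) :=
  { x | ∃ f : ℕ → (Fin n → ℤ), (∀ j, f j ∈ D) ∧
      HasSum (fun j => ((realMat A)⁻¹ ^ (j + 1)).mulVec (castVec (f j))) x }

/-- `A` yields a radix representation with digit set `D`: every integer vector is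
a finite sum `Σ_{j=0}^N A^j d_j` with digits in `D`. -/
def YieldsRadix {n : ℕ} (A : Matrix (Fin n) (Fin n) ℤ) (D : Set (Fin n → ℤ)) : Prop :=
  ∀ x : Fin n → ℤ, ∃ N : ℕ, ∃ d : ℕ → (Fin n → ℤ), (∀ j ≤ N, d j ∈ D) ∧
    x = ∑ j ∈ Finset.range (N + 1), (A ^ j).mulVec (d j)

/-- The canonical fundamental domain `F = [-1/2, 1/2)^n`. -/
def Fdom (n : ℕ) : Set (Fin n → ℝ) :=
  Set.univ.pi fun _ => Set.Ico (-(1/2) : ℝ) (1/2)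

/-- The digit set `A(F) ∩ ℤ^n`, viewed as a set of integer vectors. -/
noncomputable def digitF {n : ℕ} (A : Matrix (Fin n) (Fin n) ℤ) : Set (Fin n → ℤ) :=
  { d : Fin n → ℤ | castVec d ∈ (fun v => (realMat A).mulVec v) '' Fdom n }

/-- Multiplication of a Euclidean-space vector by a real matrix,
landing in Euclidean space (so that norms are the `ℓ²` norms). -/
noncomputable def mulVecE {n : ℕ} (B : Matrix (Fin n) (Fin n) ℝ)
    (v : EuclideanSpace ℝ (Fin n)) : EuclideanSpace ℝ (Fin n) :=
  (WithLp.equiv 2 (Fin n → ℝ)).symm (B.mulVec ((WithLp.equiv 2 (Fin n → ℝ)) v))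

/-- The smallest singular value of `A` is greater than `c`: equivalently,
`‖Av‖ > c` for every unit vector `v` (Euclidean norm). -/
noncomputable def MinSingValGT {n : ℕ} (A : Matrix (Fin n) (Fin n) ℤ) (c : ℝ) : Prop :=
  ∀ v : EuclideanSpace ℝ (Fin n), ‖v‖ = 1 → c < ‖mulVecE (realMat A) v‖

/-- Vectors expressible by a radix expansion of length at most `k`. -/
def DAk {n : ℕ} (A : Matrix (Fin n) (Fin n) ℤ) (D : Set (Fin n → ℤ)) (k : ℕ) :
    Set (Fin n → ℤ) :=
  { x : Fin n → ℤ | ∃ d : ℕ → (Fin n → ℤ), (∀ j < k, d j ∈ D) ∧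
      x = ∑ j ∈ Finset.range k, (A ^ j).mulVec (d j) }

/-- `T` tiles `ℝ^n` under translation by `ℤ^n`. -/
def TilesRn {n : ℕ} (T : Set (Fin n → ℝ)) : Prop :=
  (⋃ k : Fin n → ℤ, (fun x => x + castVec k) '' T) = Set.univ ∧
  ∀ k₁ k₂ : Fin n → ℤ, k₁ ≠ k₂ →
    volume (((fun x => x + castVec k₁) '' T) ∩ ((fun x => x + castVec k₂) '' T)) = 0

/-! Since `F = [-1/2, 1/2)^n` is a fundamental domain for `ℤ^n`, writing `x = A y + d` with
`d ∈ A(F)` amounts to `A⁻¹ x - y ∈ F`, and coordinatewise rounding of `A⁻¹ x` shows that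
exactly one integer vector `y` satisfies this. -/

open Matrix

lemma IsDilation.det_ne_zero {n : ℕ} {A : Matrix (Fin n) (Fin n) ℤ} (hA : IsDilation A) :
    A.det ≠ 0 := by
  intro hdet
  have hC : ¬ IsUnit (A.map (Int.cast : ℤ → ℂ)) := by
    rw [isUnit_iff_isUnit_det, show A.map (Int.cast : ℤ → ℂ) = (Int.castRingHom ℂ).mapMatrix A
      from rfl, ← RingHom.map_det, hdet, map_zero]
    exact not_isUnit_zero
  have := hA 0 (spectrum.zero_mem_iff ℂ |>.mpr hC)
  norm_num at this

lemma isUnit_det_realMat {n : ℕ} {A : Matrix (Fin n) (Fin n) ℤ} (hA : A.det ≠ 0) :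
    IsUnit (realMat A).det := by
  rw [show realMat A = (Int.castRingHom ℝ).mapMatrix A from rfl, ← RingHom.map_det]
  exact isUnit_iff_ne_zero.mpr (by simpa using hA)

lemma castVec_sub {n : ℕ} (a b : Fin n → ℤ) : castVec (a - b) = castVec a - castVec b := by
  ext i
  simp [castVec]

lemma castVec_mulVec {n : ℕ} (A : Matrix (Fin n) (Fin n) ℤ) (y : Fin n → ℤ) :
    castVec (A *ᵥ y) = realMat A *ᵥ castVec y := by
  ext i
  exact RingHom.map_mulVec (Int.castRingHom ℝ) A y i

lemma existsUnique_sub_castVec_mem_Fdom {n : ℕ} (t : Fin n → ℝ) :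
    ∃! y : Fin n → ℤ, t - castVec y ∈ Fdom n := by
  have hcoord (i : Fin n) : ∃! m : ℤ, t i - m • (1 : ℝ) ∈ Ico (-(1/2)) (-(1/2) + 1) :=
    existsUnique_sub_zsmul_mem_Ico one_pos (t i) _
  norm_num at hcoord
  choose y hy huniq using hcoord
  refine ⟨y, fun i _ => by simpa [castVec] using hy i, fun y' hy' => funext fun i => ?_⟩
  exact huniq i (y' i) (by simpa [castVec] using hy' i (mem_univ i))

lemma mem_digitF_iff {n : ℕ} {A : Matrix (Fin n) (Fin n) ℤ} (hA : A.det ≠ 0)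
    (d : Fin n → ℤ) : d ∈ digitF A ↔ (realMat A)⁻¹ *ᵥ castVec d ∈ Fdom n := by
  have hB := isUnit_det_realMat hA
  constructor
  · rintro ⟨u, hu, hud⟩
    rwa [← hud, mulVec_mulVec, nonsing_inv_mul _ hB, one_mulVec]
  · intro h
    exact ⟨_, h, by simp only [mulVec_mulVec, mul_nonsing_inv _ hB, one_mulVec]⟩

lemma sub_mulVec_mem_digitF_iff {n : ℕ} {A : Matrix (Fin n) (Fin n) ℤ} (hA : A.det ≠ 0)
    (x y : Fin n → ℤ) :
    x - A *ᵥ y ∈ digitF A ↔ (realMat A)⁻¹ *ᵥ castVec x - castVec y ∈ Fdom n := by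
  rw [mem_digitF_iff hA, castVec_sub, castVec_mulVec, mulVec_sub, mulVec_mulVec,
    nonsing_inv_mul _ (isUnit_det_realMat hA), one_mulVec]

theorem stmt_3_general {n : ℕ} (A : Matrix (Fin n) (Fin n) ℤ)
    (hA : IsDilation A) :
    IsDigitSet A (digitF A) := by
  intro x
  have hdet := hA.det_ne_zero
  obtain ⟨y, hy, hy_unique⟩ := existsUnique_sub_castVec_mem_Fdom ((realMat A)⁻¹ *ᵥ castVec x)
  refine ⟨x - A *ᵥ y, ⟨(sub_mulVec_mem_digitF_iff hdet x y).mpr hy, y, by abel⟩, ?_⟩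
  rintro d ⟨hd, y', rfl⟩
  rw [show d = A *ᵥ y' + d - A *ᵥ y' by abel, sub_mulVec_mem_digitF_iff hdet] at hd
  rw [hy_unique y' hd]
  abel

/-- if the smallest singular value exceeds 2, then
`D = A(F) ∩ ℤ^n` is a complete set of coset representatives of `ℤ^n / A(ℤ^n)`. -/
theorem stmt_3 {n : ℕ} (A : Matrix (Fin n) (Fin n) ℤ)
    (hA : IsDilation A) (hμ : MinSingValGT A 2) :
    IsDigitSet A (digitF A) :=
  stmt_3_general A hA
end

section
/- Let A be the twin dragon matrix A = [[1,1],[-1,1]] with digit set D = {(0,0), (1,0)}. Then A does not yield a radix representation of ℤ²: the vector (0,-1) cannot be written as a finite sum Σ_{j=0}^{N} A^j d_j with d_j ∈ D. -/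
open MeasureTheory Set

/-!
The twin dragon expansion of `(0,-1)` can never terminate: writing `(0,-1) = d₀ + A y`, the digit
`(0,0)` is ruled out by parity and the digit `(1,0)` forces `y = (0,-1)` again, so stripping the
lowest digit of a finite expansion of `(0,-1)` leaves a shorter finite expansion of `(0,-1)`.
-/

namespace Matrix

variable {ι R : Type*} [Fintype ι] [DecidableEq ι] [Semiring R]

theorem sum_range_succ_pow_mulVec (A : Matrix ι ι R) (d : ℕ → ι → R) (N : ℕ) :
    ∑ j ∈ Finset.range (N + 1), (A ^ j) *ᵥ d j =
      d 0 + A *ᵥ ∑ j ∈ Finset.range N, (A ^ j) *ᵥ d (j + 1) := by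
  simp only [Finset.sum_range_succ', pow_zero, one_mulVec, mulVec_sum, pow_succ',
    mulVec_mulVec, add_comm]

theorem ne_sum_pow_mulVec_of_invariant (A : Matrix ι ι R) {D P : Set (ι → R)}
    (hPD : Disjoint P D) (hP : ∀ x ∈ P, ∀ d ∈ D, ∀ y, x = d + A *ᵥ y → y ∈ P)
    (N : ℕ) {x : ι → R} (hx : x ∈ P) {d : ℕ → ι → R} (hd : ∀ j ≤ N, d j ∈ D) :
    x ≠ ∑ j ∈ Finset.range (N + 1), (A ^ j) *ᵥ d j := by
  induction N generalizing x d with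
  | zero =>
    rintro rfl
    simpa using hPD.ne_of_mem hx (hd 0 le_rfl)
  | succ N ih =>
    intro hxd
    rw [sum_range_succ_pow_mulVec] at hxd
    refine ih (hP x hx (d 0) (hd 0 N.succ.zero_le) _ hxd) (fun j hj => hd (j + 1) ?_) rfl
    omega

end Matrix

open Matrix

theorem eq_of_twinDragon_digit_add_mulVec {d y : Fin 2 → ℤ}
    (hd : d ∈ ({![0, 0], ![1, 0]} : Set (Fin 2 → ℤ)))
    (h : ![0, -1] = d + (!![1, 1; -1, 1] : Matrix (Fin 2) (Fin 2) ℤ) *ᵥ y) : y = ![0, -1] := by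
  have h0 : 0 = d 0 + (y 0 + y 1) := by simpa [dotProduct] using congrFun h 0
  have h1 : -1 = d 1 + (-y 0 + y 1) := by simpa [dotProduct] using congrFun h 1
  rcases hd with rfl | rfl
  · simp only [cons_val_zero, cons_val_one] at h0 h1
    omega -- `2 * y 1 = -1`
  · simp only [cons_val_zero, cons_val_one] at h0 h1
    ext i
    fin_cases i <;> simp <;> omega

/-- the twin dragon matrix with digit set `{(0,0),(1,0)}` does not
yield a radix representation: `(0,-1)` has no finite expansion. -/
theorem stmt_17 :
    ¬ ∃ (N : ℕ) (d : ℕ → (Fin 2 → ℤ)),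
        (∀ j ≤ N, d j ∈ ({![0, 0], ![1, 0]} : Set (Fin 2 → ℤ))) ∧
        ![0, -1] = ∑ j ∈ Finset.range (N + 1),
          ((!![1, 1; -1, 1] : Matrix (Fin 2) (Fin 2) ℤ) ^ j).mulVec (d j) := by
  rintro ⟨N, d, hd, hsum⟩
  have hPD : Disjoint ({![0, -1]} : Set (Fin 2 → ℤ)) {![0, 0], ![1, 0]} := by
    simp [Set.disjoint_singleton_left, funext_iff, Fin.forall_fin_two]
  have hP : ∀ x ∈ ({![0, -1]} : Set (Fin 2 → ℤ)), ∀ d ∈ ({![0, 0], ![1, 0]} : Set (Fin 2 → ℤ)),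
      ∀ y, x = d + !![1, 1; -1, 1] *ᵥ y → y ∈ ({![0, -1]} : Set (Fin 2 → ℤ)) := by
    rintro x rfl d hd y h
    exact eq_of_twinDragon_digit_add_mulVec hd h
  exact ne_sum_pow_mulVec_of_invariant _ hPD hP N rfl hd hsum
end
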